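/- Let p, q be coprime positive integers and let A, B ∈ SL(2,ℂ) satisfy A^q = B^p. If A and B have a common eigenvector in ℂ², then there exists t ∈ ℂ with t ≠ 0 such that tr A = t^p + t^{−p}, tr B = t^q + t^{−q}, and tr(AB) = t^{p+q} + t^{−(p+q)}. -/
import Mathlib


/-- `A` and `B` have a common eigenvector in `ℂ²`. -/
def HasCommonEigenvector (A B : Matrix (Fin 2) (Fin 2) ℂ) : Prop :=
  ∃ v : Fin 2 → ℂ, v ≠ 0 ∧ (∃ a : ℂ, A.mulVec v = a • v) ∧ (∃ b : ℂ, B.mulVec v = b • v)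

lemma eig_quad (M : Matrix (Fin 2) (Fin 2) ℂ) (hdet : M.det = 1)
    (v : Fin 2 → ℂ) (hv : v ≠ 0) (a : ℂ) (h : M.mulVec v = a • v) :
    a ≠ 0 ∧ M.trace = a + a⁻¹ := by
  have h0 : (M - a • 1).mulVec v = 0 := by
    rw [Matrix.sub_mulVec, h, Matrix.smul_mulVec, Matrix.one_mulVec, sub_self]
  have hd : (M - a • 1).det = 0 := Matrix.exists_mulVec_eq_zero_iff.mp ⟨v, hv, h0⟩
  have hd' : (M 0 0 - a) * (M 1 1 - a) - (M 0 1) * (M 1 0) = 0 := by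
    rw [Matrix.det_fin_two] at hd
    simpa using hd
  have hdet' : M 0 0 * M 1 1 - M 0 1 * M 1 0 = 1 := by
    rw [Matrix.det_fin_two] at hdet; exact hdet
  have key : a * a - a * (M 0 0 + M 1 1) + 1 = 0 := by linear_combination hd' - hdet'
  have ha : a ≠ 0 := by
    intro h0a
    rw [h0a] at key
    simp at key
  refine ⟨ha, ?_⟩
  rw [Matrix.trace_fin_two]
  field_simp
  linear_combination -key

lemma eig_pow (M : Matrix (Fin 2) (Fin 2) ℂ) (v : Fin 2 → ℂ) (a : ℂ)
    (h : M.mulVec v = a • v) (n : ℕ) : (M ^ n).mulVec v = a ^ n • v := by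
  induction n with
  | zero => simp
  | succ n ih =>
    rw [pow_succ, ← Matrix.mulVec_mulVec, h, Matrix.mulVec_smul, ih, smul_smul, pow_succ]
    ring_nf

/-- If `p, q` are coprime positive integers and `A, B ∈ SL(2,ℂ)` with `A^q = B^p` form a
reducible pair, then there is `t ≠ 0` with `tr A = t^p + t^{-p}`, `tr B = t^q + t^{-q}`
and `tr(AB) = t^{p+q} + t^{-(p+q)}`. -/
theorem stmt_6 (p q : ℕ) (hp : 0 < p) (hq : 0 < q) (hpq : Nat.Coprime p q)
    (A B : Matrix.SpecialLinearGroup (Fin 2) ℂ)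
    (hAB : A ^ q = B ^ p)
    (hred : HasCommonEigenvector A.1 B.1) :
    ∃ t : ℂ, t ≠ 0 ∧
      Matrix.trace A.1 = t ^ p + t⁻¹ ^ p ∧
      Matrix.trace B.1 = t ^ q + t⁻¹ ^ q ∧
      Matrix.trace ((A * B : Matrix.SpecialLinearGroup (Fin 2) ℂ) : Matrix (Fin 2) (Fin 2) ℂ)
        = t ^ (p + q) + t⁻¹ ^ (p + q) := by
  obtain ⟨v, hv, ⟨a, ha⟩, ⟨b, hb⟩⟩ := hred
  obtain ⟨ha0, htrA⟩ := eig_quad A.1 A.2 v hv a ha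
  obtain ⟨hb0, htrB⟩ := eig_quad B.1 B.2 v hv b hb
  -- AB eigen
  have hABv : ((A * B : Matrix.SpecialLinearGroup (Fin 2) ℂ) : Matrix (Fin 2) (Fin 2) ℂ).mulVec v
      = (a * b) • v := by
    rw [Matrix.SpecialLinearGroup.coe_mul, ← Matrix.mulVec_mulVec, hb, Matrix.mulVec_smul, ha,
      smul_smul, mul_comm b a]
  obtain ⟨hab0, htrAB⟩ := eig_quad _ (A * B).2 v hv (a * b) hABv
  -- a ^ q = b ^ p
  have hpowmat : (A.1) ^ q = (B.1) ^ p := by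
    have := congrArg (fun M : Matrix.SpecialLinearGroup (Fin 2) ℂ =>
      (M : Matrix (Fin 2) (Fin 2) ℂ)) hAB
    simpa using this
  have hqvec : (a ^ q) • v = (b ^ p) • v := by
    rw [← eig_pow A.1 v a ha q, ← eig_pow B.1 v b hb p, hpowmat]
  have hab : a ^ q = b ^ p := by
    obtain ⟨i, hi⟩ := Function.ne_iff.mp hv
    have := congrFun hqvec i
    simp only [Pi.smul_apply, smul_eq_mul] at this
    exact mul_right_cancel₀ hi this
  -- Bezout
  obtain ⟨m, n, hmn⟩ : ∃ m n : ℤ, (p : ℤ) * m + (q : ℤ) * n = 1 := by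
    refine ⟨Int.gcdA p q, Int.gcdB p q, ?_⟩
    have := Int.gcd_eq_gcd_ab (p : ℤ) (q : ℤ)
    rw [Int.gcd_natCast_natCast, hpq] at this
    exact_mod_cast this.symm
  set t : ℂ := a ^ m * b ^ n with ht
  have ht0 : t ≠ 0 := mul_ne_zero (zpow_ne_zero _ ha0) (zpow_ne_zero _ hb0)
  have habz : (a : ℂ) ^ (q : ℤ) = b ^ (p : ℤ) := by
    rw [zpow_natCast, zpow_natCast]; exact hab
  have htp : t ^ (p : ℤ) = a := by
    calc t ^ (p : ℤ) = a ^ (m * p) * b ^ (n * p) := by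
          rw [ht, mul_zpow, ← zpow_mul, ← zpow_mul]
      _ = a ^ (m * p) * (b ^ (p : ℤ)) ^ n := by rw [← zpow_mul, mul_comm (p : ℤ) n]
      _ = a ^ (m * p) * (a ^ (q : ℤ)) ^ n := by rw [habz]
      _ = a ^ (m * p + q * n) := by rw [← zpow_mul, ← zpow_add₀ ha0]
      _ = a := by rw [show m * (p : ℤ) + q * n = 1 by linarith, zpow_one]
  have htq : t ^ (q : ℤ) = b := by
    calc t ^ (q : ℤ) = a ^ (m * q) * b ^ (n * q) := by
          rw [ht, mul_zpow, ← zpow_mul, ← zpow_mul]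
      _ = (a ^ (q : ℤ)) ^ m * b ^ (n * q) := by rw [← zpow_mul, mul_comm (q : ℤ) m]
      _ = (b ^ (p : ℤ)) ^ m * b ^ (n * q) := by rw [habz]
      _ = b ^ (p * m + n * q) := by rw [← zpow_mul, ← zpow_add₀ hb0]
      _ = b := by rw [show (p : ℤ) * m + n * q = 1 by linarith, zpow_one]
  have htpn : t ^ p = a := by rw [← zpow_natCast t p, htp]
  have htqn : t ^ q = b := by rw [← zpow_natCast t q, htq]
  refine ⟨t, ht0, ?_, ?_, ?_⟩
  · rw [htrA, htpn, inv_pow, htpn]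
  · rw [htrB, htqn, inv_pow, htqn]
  · rw [htrAB, pow_add, htpn, htqn, inv_pow, pow_add, htpn, htqn, mul_inv]
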